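/- arXiv:1401.6329 — 6 statements merged into one kernel-verified Lean document; each statement's English description precedes it below -/
import Mathlib

section
/- For every integer n ≥ 2, β_n is a Perron number: it is an algebraic integer greater than 1, and every other complex root γ of its minimal polynomial satisfies |γ| < β_n. -/
/-!
A complex root `z` of the minimal polynomial of `b` is a root of `X ^ n - X - 1`, so
`‖z‖ ^ n = ‖z + 1‖ ≤ ‖z‖ + 1`. As `x ↦ x ^ n - x` is strictly increasing on `[1, ∞)` and equals
`1` at `b`, this gives `‖z‖ ≤ b`. In the equality case the triangle inequality `‖z + 1‖ ≤ ‖z‖ + 1`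
is sharp, so `z` is a nonnegative real number, hence `z = b`.
-/

open Polynomial

theorem monic_X_pow_sub_X_sub_one {R : Type*} [CommRing R] {n : ℕ} (hn : 2 ≤ n) :
    (X ^ n - X - 1 : R[X]).Monic := by
  rw [sub_sub]
  refine monic_X_pow_sub ((degree_add_le _ _).trans_lt (max_lt ?_ ?_))
  · exact degree_X_le.trans_lt (by exact_mod_cast hn)
  · exact degree_one_le.trans_lt (by exact_mod_cast (by omega : 0 < n))

theorem strictMonoOn_pow_sub_self {n : ℕ} (hn : 2 ≤ n) :
    StrictMonoOn (fun x : ℝ => x ^ n - x) (Set.Ici 1) := by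
  obtain ⟨m, rfl⟩ := Nat.exists_eq_add_of_le' hn
  intro a ha c hc hac
  simp only [Set.mem_Ici] at ha hc
  have hpow : a ^ (m + 1) ≤ c ^ (m + 1) := pow_le_pow_left₀ (by linarith) hac.le _
  have hc1 : 1 < c ^ (m + 1) := one_lt_pow₀ (by linarith) (by omega)
  have ha1 : 1 ≤ a ^ (m + 1) := one_le_pow₀ ha
  simp only [pow_succ _ (m + 1)]
  nlinarith

theorem Complex.eq_norm_of_norm_add_one {z : ℂ} (h : ‖z + 1‖ = ‖z‖ + 1) : z = ‖z‖ := by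
  have hray : ‖(1 : ℂ)‖ • z = ‖z‖ • 1 :=
    (norm_add_eq_iff_real (x := z) (y := 1)).mp (by rwa [norm_one])
  simpa using hray

theorem Complex.norm_lt_of_pow_eq_add_one {n : ℕ} (hn : 2 ≤ n) {b : ℝ} (hb : 1 < b)
    (hbn : b ^ n = b + 1) {z : ℂ} (hzn : z ^ n = z + 1) (hzb : z ≠ b) : ‖z‖ < b := by
  have hnorm : ‖z‖ ^ n = ‖z + 1‖ := by rw [← norm_pow, hzn]
  have hle : ‖z‖ ≤ b := by
    by_contra! hbz
    have hmono : b ^ n - b < ‖z‖ ^ n - ‖z‖ :=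
      strictMonoOn_pow_sub_self hn hb.le (hb.trans hbz).le hbz
    have htri : ‖z + 1‖ ≤ ‖z‖ + 1 := (norm_add_le z 1).trans_eq (by rw [norm_one])
    linarith
  refine hle.lt_of_ne fun heq => hzb ?_
  have hsharp : ‖z + 1‖ = ‖z‖ + 1 := by rw [← hnorm, heq, hbn]
  rw [Complex.eq_norm_of_norm_add_one hsharp, heq]

/-- For every integer `n ≥ 2`, the real root `β_n > 1` of `x^n - x - 1` is a
Perron number: it is an algebraic integer greater than `1`, and every complex
root of its minimal polynomial other than `β_n` itself has absolute value
strictly less than `β_n`. -/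
theorem beta_is_perron (n : ℕ) (hn : 2 ≤ n) (b : ℝ)
    (hb : 1 < b) (hroot : b ^ n - b - 1 = 0) :
    IsIntegral ℤ b ∧
      ∀ z : ℂ, Polynomial.aeval z (minpoly ℚ b) = 0 → z ≠ (b : ℂ) →
        ‖z‖ < b := by
  have hbn : b ^ n = b + 1 := by linear_combination hroot
  refine ⟨⟨X ^ n - X - 1, monic_X_pow_sub_X_sub_one hn, by simp [hroot]⟩, fun z hz hzb => ?_⟩
  have hbQ : aeval b (X ^ n - X - 1 : ℚ[X]) = 0 := by simp [hroot]
  have hzQ : aeval z (X ^ n - X - 1 : ℚ[X]) = 0 :=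
    aeval_eq_zero_of_dvd_aeval_eq_zero (minpoly.dvd ℚ b hbQ) hz
  have hzn : z ^ n = z + 1 := by
    simp only [map_sub, map_pow, aeval_X, map_one] at hzQ
    linear_combination hzQ
  exact Complex.norm_lt_of_pow_eq_add_one hn hb hbn hzn hzb
end

section
/- For every integer n ≥ 4, β_n is not a Pisot number: x^n - x - 1 has a complex root γ with |γ| > 1 and γ ≠ β_n. -/
/-!
Suppose every root of `P(z) = z^n - z - 1` other than `b` lay in the closed unit disk. None lies
on the unit circle (there `|z| = |z + 1| = 1` forces `z^2 + z + 1 = 0`, which is incompatible with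
`z^n = z + 1`), so they lie in the open disk. Write `P(z) = (z - b) Q(z)` and let `Q*` be the
reciprocal polynomial of `Q`. Then `h = -Q/Q*` is holomorphic on the closed disk and unimodular on
the circle, so it maps the disk into itself, with `h(0) = -1/b` and `h'(0) = (b^2 - b - 1)/b^2`.
The Schwarz–Pick bound `|h'(0)| ≤ 1 - |h(0)|^2` then gives `2 b^2 ≥ b + 2`, whereas for `n ≥ 4`
we have `b^4 ≤ b^n = b + 1`, which forces `2 b^2 < b + 2`.
-/

open Metric Set ComplexConjugate

namespace Complex

theorem norm_sub_le_norm_one_sub_conj_mul {c w : ℂ} (hc : ‖c‖ ≤ 1) (hw : ‖w‖ ≤ 1) :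
    ‖w - c‖ ≤ ‖1 - conj c * w‖ := by
  have key : ‖1 - conj c * w‖ ^ 2 - ‖w - c‖ ^ 2 = (1 - ‖c‖ ^ 2) * (1 - ‖w‖ ^ 2) := by
    simp only [← normSq_eq_norm_sq, normSq_apply, sub_re, sub_im, mul_re, mul_im, conj_re,
      conj_im, one_re, one_im]
    ring
  have : 0 ≤ (1 - ‖c‖ ^ 2) * (1 - ‖w‖ ^ 2) :=
    mul_nonneg (by nlinarith [norm_nonneg c]) (by nlinarith [norm_nonneg w])
  exact (pow_le_pow_iff_left₀ (norm_nonneg _) (norm_nonneg _) two_ne_zero).1 (by linarith)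

/-- The Schwarz–Pick lemma at the origin: apply the Schwarz lemma to `f` followed by the
automorphism of the disk sending `f 0` to `0`. -/
theorem norm_deriv_le_one_sub_sq_of_mapsTo_ball {f : ℂ → ℂ} {f' : ℂ}
    (hd : DifferentiableOn ℂ f (ball 0 1)) (hmaps : MapsTo f (ball 0 1) (closedBall 0 1))
    (h0 : ‖f 0‖ < 1) (hf' : HasDerivAt f f' 0) : ‖f'‖ ≤ 1 - ‖f 0‖ ^ 2 := by
  set c := f 0
  have hden : ∀ z ∈ ball (0 : ℂ) 1, 1 - conj c * f z ≠ 0 := by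
    intro z hz h
    have hfz : ‖f z‖ ≤ 1 := mem_closedBall_zero_iff.1 (hmaps hz)
    have : ‖conj c * f z‖ = 1 := by rw [← sub_eq_zero.1 h, norm_one]
    rw [norm_mul, norm_conj] at this
    nlinarith [norm_nonneg c, norm_nonneg (f z)]
  set g : ℂ → ℂ := fun z ↦ (f z - c) / (1 - conj c * f z)
  have hgd : DifferentiableOn ℂ g (ball 0 1) :=
    (hd.sub_const c).div ((differentiableOn_const 1).sub (hd.const_mul _)) hden
  have hgmaps : MapsTo g (ball 0 1) (closedBall (g 0) 1) := by
    intro z hz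
    rw [show g 0 = 0 by simp [g, c], mem_closedBall_zero_iff, norm_div,
      div_le_one (norm_pos_iff.2 (hden z hz))]
    exact norm_sub_le_norm_one_sub_conj_mul h0.le (mem_closedBall_zero_iff.1 (hmaps hz))
  have hc : 1 - conj c * c = ((1 - ‖c‖ ^ 2 : ℝ) : ℂ) := by push_cast; rw [conj_mul']
  have hc0 : (0 : ℝ) < 1 - ‖c‖ ^ 2 := by nlinarith [norm_nonneg c]
  have hg' : HasDerivAt g (f' / (1 - conj c * c)) 0 := by
    have hden0 : 1 - conj c * c ≠ 0 := hden 0 (mem_ball_self one_pos)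
    refine ((hf'.sub_const c).div ((hf'.const_mul (conj c)).const_sub 1) hden0).congr_deriv ?_
    change (f' * (1 - conj c * c) - (c - c) * -(conj c * f')) / (1 - conj c * c) ^ 2 = _
    field_simp
    ring
  have := norm_deriv_le_one_of_mapsTo_ball hgd hgmaps one_pos
  rwa [hg'.deriv, hc, norm_div, norm_real, Real.norm_of_nonneg hc0.le, div_le_one hc0] at this

theorem sq_add_self_add_one_eq_zero_of_norm_eq_one {z : ℂ} (hz : ‖z‖ = 1)
    (hz1 : ‖z + 1‖ = 1) : z ^ 2 + z + 1 = 0 := by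
  have hzz : z * conj z = 1 := by rw [mul_conj', hz]; norm_num
  have hzz1 : (z + 1) * conj (z + 1) = 1 := by rw [mul_conj', hz1]; norm_num
  rw [map_add, map_one] at hzz1
  linear_combination z * hzz1 - (z + 1) * hzz

theorem pow_sub_self_sub_one_ne_zero_of_norm_eq_one (n : ℕ) {z : ℂ} (hz : ‖z‖ = 1) :
    z ^ n - z - 1 ≠ 0 := by
  intro h
  have hzn : z ^ n = z + 1 := by linear_combination h
  have hq := sq_add_self_add_one_eq_zero_of_norm_eq_one hz (by rw [← hzn, norm_pow, hz, one_pow])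
  have h3 : z ^ 3 = 1 := by linear_combination (z - 1) * hq
  rw [← Nat.div_add_mod n 3, pow_add, pow_mul, h3, one_pow, one_mul] at hzn
  have : n % 3 < 3 := Nat.mod_lt _ (by norm_num)
  interval_cases n % 3
  · have : z = 0 := by linear_combination -hzn
    simp [this] at hz
  · simp at hzn
  · have : z = -1 := by linear_combination (hq - hzn) / 2
    norm_num [this] at hq

end Complex

/-- When `b ^ (m + 1) = b + 1` this is `(1 - z^m - z^(m+1)) / (1 - b z)`
(`one_sub_mul_reciprocalCofactor`), the reciprocal polynomial of `(z^(m+1) - z - 1) / (z - b)`. -/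
noncomputable def reciprocalCofactor (b : ℝ) (m : ℕ) (z : ℂ) : ℂ :=
  ∑ i ∈ Finset.range (m + 1), ((b : ℂ) * z) ^ i - z ^ m

/-- `-Q/Q*`, where `Q(z) = (z^(m+1) - z - 1) / (z - b)` and `Q* = reciprocalCofactor b m`. -/
noncomputable def blaschkeQuotient (b : ℝ) (m : ℕ) (z : ℂ) : ℂ :=
  (z ^ (m + 1) - z - 1) / ((b - z) * reciprocalCofactor b m z)

section

variable {b : ℝ} {m : ℕ}

theorem one_sub_mul_reciprocalCofactor (hb : b ^ (m + 1) = b + 1) (z : ℂ) :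
    (1 - b * z) * reciprocalCofactor b m z = 1 - z ^ m - z ^ (m + 1) := by
  have hbC : (b : ℂ) ^ (m + 1) = b + 1 := by exact_mod_cast hb
  rw [reciprocalCofactor, mul_sub, mul_neg_geom_sum, mul_pow, hbC]
  ring

theorem differentiable_reciprocalCofactor : Differentiable ℂ (reciprocalCofactor b m) := by
  unfold reciprocalCofactor
  fun_prop

theorem reciprocalCofactor_zero (hm : 1 ≤ m) : reciprocalCofactor b m 0 = 1 := by
  simp [reciprocalCofactor, zero_pow (by omega : m ≠ 0)]

theorem hasDerivAt_reciprocalCofactor_zero (hm : 2 ≤ m) :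
    HasDerivAt (reciprocalCofactor b m) b 0 := by
  have hsum := HasDerivAt.fun_sum (u := Finset.range (m + 1))
    (fun i _ ↦ ((hasDerivAt_id (0 : ℂ)).const_mul (b : ℂ)).pow i)
  refine (hsum.sub (hasDerivAt_pow m 0)).congr_deriv ?_
  rw [Finset.sum_eq_single 1]
  · simp [zero_pow (by omega : m - 1 ≠ 0)]
  · intro i _ hi
    simp only [id, mul_zero, mul_one, mul_eq_zero, pow_eq_zero_iff', Nat.cast_eq_zero, ne_eq,
      true_and]
    exact Or.inl (by omega)
  · simp only [Finset.mem_range]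
    omega

theorem reciprocalCofactor_ne_zero (hm : 1 ≤ m) (hb : b ^ (m + 1) = b + 1)
    (hroots : ∀ γ : ℂ, γ ^ (m + 1) - γ - 1 = 0 → γ ≠ b → ‖γ‖ < 1) {z : ℂ} (hz : ‖z‖ ≤ 1) :
    reciprocalCofactor b m z ≠ 0 := by
  intro h0
  by_cases hbz : (b : ℂ) * z = 1
  · have hG : ((m + 1 : ℕ) : ℂ) = z ^ m := by
      simpa [reciprocalCofactor, hbz, sub_eq_zero] using h0
    have : ((m + 1 : ℕ) : ℝ) ≤ 1 := by
      rw [← Complex.norm_natCast, hG, norm_pow]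
      exact pow_le_one₀ (norm_nonneg z) hz
    have : m + 1 ≤ 1 := by exact_mod_cast this
    omega
  · have hrec : 1 - z ^ m - z ^ (m + 1) = 0 := by
      rw [← one_sub_mul_reciprocalCofactor hb, h0, mul_zero]
    have hz0 : z ≠ 0 := by
      rintro rfl
      simp [zero_pow (by omega : m ≠ 0)] at hrec
    have hroot : z⁻¹ ^ (m + 1) - z⁻¹ - 1 = 0 := by
      have hp : z⁻¹ ^ (m + 1) * z ^ (m + 1) = 1 := by
        rw [← mul_pow, inv_mul_cancel₀ hz0, one_pow]
      have : (z⁻¹ ^ (m + 1) - z⁻¹ - 1) * z ^ (m + 1) = 1 - z ^ m - z ^ (m + 1) := by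
        linear_combination hp - z ^ m * inv_mul_cancel₀ hz0
      rw [hrec] at this
      exact (mul_eq_zero.1 this).resolve_right (pow_ne_zero _ hz0)
    have hne : z⁻¹ ≠ b := by
      rintro hzb
      exact hbz (by rw [← hzb, inv_mul_cancel₀ hz0])
    have := hroots _ hroot hne
    rw [norm_inv, inv_lt_one₀ (norm_pos_iff.2 hz0)] at this
    linarith

theorem norm_blaschkeQuotient_le_one (hb : b ^ (m + 1) = b + 1) {z : ℂ} (hz : ‖z‖ = 1) :
    ‖blaschkeQuotient b m z‖ ≤ 1 := by
  have hzz : z * conj z = 1 := by rw [Complex.mul_conj', hz]; norm_num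
  have hlin : ‖(b : ℂ) - z‖ = ‖1 - b * z‖ := by
    have : (b : ℂ) - z = -z * conj (1 - b * z) := by
      simp only [map_sub, map_one, map_mul, Complex.conj_ofReal]
      linear_combination (-b : ℂ) * hzz
    rw [this, norm_mul, norm_neg, hz, one_mul, Complex.norm_conj]
  have hrec : ‖z ^ (m + 1) - z - 1‖ = ‖1 - z ^ m - z ^ (m + 1)‖ := by
    have : z ^ (m + 1) - z - 1 = z ^ (m + 1) * conj (1 - z ^ m - z ^ (m + 1)) := by
      simp only [map_sub, map_one, map_pow]
      have hw (k : ℕ) : z ^ k * conj z ^ k = 1 := by rw [← mul_pow, hzz, one_pow]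
      linear_combination z * hw m + hw (m + 1)
    rw [this, norm_mul, norm_pow, hz, one_pow, one_mul, Complex.norm_conj]
  rw [blaschkeQuotient, norm_div, norm_mul, hlin, ← norm_mul, one_sub_mul_reciprocalCofactor hb,
    ← hrec]
  exact div_self_le_one _

theorem differentiableOn_blaschkeQuotient (hm : 1 ≤ m) (hb1 : 1 < b) (hb : b ^ (m + 1) = b + 1)
    (hroots : ∀ γ : ℂ, γ ^ (m + 1) - γ - 1 = 0 → γ ≠ b → ‖γ‖ < 1) :
    DifferentiableOn ℂ (blaschkeQuotient b m) (closedBall 0 1) := by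
  refine DifferentiableOn.div (by fun_prop)
    (((differentiable_const _).sub differentiable_id).mul differentiable_reciprocalCofactor
      |>.differentiableOn) fun z hz ↦ mul_ne_zero ?_ ?_
  · rintro h
    rw [mem_closedBall_zero_iff, ← sub_eq_zero.1 h, Complex.norm_real, Real.norm_eq_abs] at hz
    exact absurd hb1 (not_lt.2 ((le_abs_self b).trans hz))
  · exact reciprocalCofactor_ne_zero hm hb hroots (mem_closedBall_zero_iff.1 hz)

theorem mapsTo_blaschkeQuotient (hm : 1 ≤ m) (hb1 : 1 < b) (hb : b ^ (m + 1) = b + 1)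
    (hroots : ∀ γ : ℂ, γ ^ (m + 1) - γ - 1 = 0 → γ ≠ b → ‖γ‖ < 1) :
    MapsTo (blaschkeQuotient b m) (closedBall 0 1) (closedBall 0 1) := by
  intro z hz
  have hd := differentiableOn_blaschkeQuotient hm hb1 hb hroots
  rw [← closure_ball (0 : ℂ) one_ne_zero] at hd hz
  rw [mem_closedBall_zero_iff]
  refine Complex.norm_le_of_forall_mem_frontier_norm_le isBounded_ball hd.diffContOnCl
    (fun w hw ↦ ?_) hz
  rw [frontier_ball (0 : ℂ) one_ne_zero, mem_sphere_zero_iff_norm] at hw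
  exact norm_blaschkeQuotient_le_one hb hw

theorem norm_blaschkeQuotient_zero (hm : 1 ≤ m) (hb1 : 1 < b) :
    ‖blaschkeQuotient b m 0‖ = b⁻¹ := by
  simp [blaschkeQuotient, reciprocalCofactor_zero hm, abs_of_pos (zero_lt_one.trans hb1)]

theorem hasDerivAt_blaschkeQuotient_zero (hm : 2 ≤ m) (hb : b ≠ 0) :
    HasDerivAt (blaschkeQuotient b m) (((b ^ 2 - b - 1) / b ^ 2 : ℝ) : ℂ) 0 := by
  have hP : HasDerivAt (fun z : ℂ ↦ z ^ (m + 1) - z - 1) (-1) 0 := by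
    simpa [zero_pow (by omega : m ≠ 0)] using
      ((hasDerivAt_pow (m + 1) (0 : ℂ)).sub (hasDerivAt_id 0)).sub_const 1
  have hD := ((hasDerivAt_id (0 : ℂ)).const_sub (b : ℂ)).mul
    (hasDerivAt_reciprocalCofactor_zero (b := b) hm)
  have hb' : (b : ℂ) ≠ 0 := by exact_mod_cast hb
  have hG0 := reciprocalCofactor_zero (b := b) (by omega : 1 ≤ m)
  refine (hP.div hD (by simp [hG0, hb'])).congr_deriv ?_
  simp only [Pi.mul_apply, id, sub_zero, hG0, mul_one]
  push_cast
  field_simp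
  ring

end

theorem sq_sub_one_lt_abs_of_pow_four_le {b : ℝ} (hb : 1 < b) (h4 : b ^ 4 ≤ b + 1) :
    b ^ 2 - 1 < |b ^ 2 - b - 1| := by
  nlinarith [neg_le_abs (b ^ 2 - b - 1)]

/-- For every integer `n ≥ 4`, the real root `β_n > 1` of `x^n - x - 1` is not
a Pisot number: `x^n - x - 1` has a complex root `γ ≠ β_n` with `|γ| > 1`. -/
theorem beta_not_pisot (n : ℕ) (hn : 4 ≤ n) (b : ℝ)
    (hb : 1 < b) (hroot : b ^ n - b - 1 = 0) :
    ∃ γ : ℂ, γ ^ n - γ - 1 = 0 ∧ 1 < ‖γ‖ ∧ γ ≠ (b : ℂ) := by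
  obtain ⟨m, rfl⟩ : ∃ m, n = m + 1 := ⟨n - 1, by omega⟩
  have hm : 1 ≤ m := by omega
  have hbm : b ^ (m + 1) = b + 1 := by linear_combination hroot
  by_contra! hout
  have hroots : ∀ γ : ℂ, γ ^ (m + 1) - γ - 1 = 0 → γ ≠ b → ‖γ‖ < 1 := fun γ hγ hne ↦
    (not_lt.1 fun h ↦ hne (hout γ hγ h)).lt_of_ne
      fun h ↦ Complex.pow_sub_self_sub_one_ne_zero_of_norm_eq_one _ h hγ
  have hpick := Complex.norm_deriv_le_one_sub_sq_of_mapsTo_ball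
    ((differentiableOn_blaschkeQuotient hm hb hbm hroots).mono ball_subset_closedBall)
    ((mapsTo_blaschkeQuotient hm hb hbm hroots).mono_left ball_subset_closedBall)
    (by rw [norm_blaschkeQuotient_zero hm hb]; exact inv_lt_one_of_one_lt₀ hb)
    (hasDerivAt_blaschkeQuotient_zero (by omega) (by positivity))
  rw [norm_blaschkeQuotient_zero hm hb, Complex.norm_real, Real.norm_eq_abs, abs_div,
    abs_of_pos (by positivity : (0 : ℝ) < b ^ 2), div_le_iff₀ (by positivity), sub_mul,
    inv_pow, inv_mul_cancel₀ (by positivity), one_mul] at hpick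
  have hb4 : b ^ 4 ≤ b + 1 := hbm ▸ pow_le_pow_right₀ hb.le (by omega)
  exact (sq_sub_one_lt_abs_of_pow_four_le hb hb4).not_ge hpick
end

section
/- Let β > 1 be an algebraic number with a conjugate γ satisfying |γ| > 1, and let σ : ℚ(β) → ℂ be the field embedding sending β to γ. Suppose (x_m) is a sequence in ℚ(β) satisfying x_{m+1} = β x_m - c_{m+1} with integers c_{m+1} ∈ [0, ⌊β⌋]. If for some k we have |σ(x_k)| > ⌊β⌋/(|γ| - 1), then the sequence (|σ(x_m)|) is strictly increasing for m ≥ k and diverges to infinity. -/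
/-! Writing `a = ‖γ‖` and `B = ⌊β⌋`, the recursion gives `‖v (m+1)‖ ≥ a ‖v m‖ - B`. The number
`L = B / (a - 1)` is the fixed point of `x ↦ a x - B`, so the excess `‖v m‖ - L` is multiplied by at
least `a > 1` at each step: once positive, it stays positive and grows geometrically. -/

open Filter

section AffineGrowth

variable {u : ℕ → ℝ} {a B : ℝ}

theorem pow_mul_le_of_mul_le_succ {w : ℕ → ℝ} (ha : 0 ≤ a) (h : ∀ m, a * w m ≤ w (m + 1))
    (k n : ℕ) : a ^ n * w k ≤ w (k + n) := by
  induction n with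
  | zero => simp
  | succ n ih =>
    calc a ^ (n + 1) * w k = a * (a ^ n * w k) := by ring
      _ ≤ a * w (k + n) := mul_le_mul_of_nonneg_left ih ha
      _ ≤ w (k + n + 1) := h _

theorem mul_sub_le_sub_succ_of_mul_sub_le_succ (ha : a ≠ 1)
    (h : ∀ m, a * u m - B ≤ u (m + 1)) (m : ℕ) :
    a * (u m - B / (a - 1)) ≤ u (m + 1) - B / (a - 1) := by
  have hfix : a * (B / (a - 1)) - B = B / (a - 1) := by
    field_simp [sub_ne_zero.2 ha]
    ring
  linarith [h m]

theorem lt_of_mul_sub_le_succ (ha : 1 < a) (h : ∀ m, a * u m - B ≤ u (m + 1)) {k m : ℕ}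
    (hk : B / (a - 1) < u k) (hm : k ≤ m) : B / (a - 1) < u m := by
  obtain ⟨n, rfl⟩ := Nat.exists_eq_add_of_le hm
  have := pow_mul_le_of_mul_le_succ (by linarith) (mul_sub_le_sub_succ_of_mul_sub_le_succ
    ha.ne' h) k n
  nlinarith [pow_pos (zero_lt_one.trans ha) n]

theorem strictMonoOn_Ici_of_mul_sub_le_succ (ha : 1 < a) (h : ∀ m, a * u m - B ≤ u (m + 1))
    {k : ℕ} (hk : B / (a - 1) < u k) : StrictMonoOn u (Set.Ici k) := by
  refine strictMonoOn_of_lt_add_one Set.ordConnected_Ici fun m _ hm _ ↦ ?_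
  have hpos := sub_pos.2 (lt_of_mul_sub_le_succ ha h hk hm)
  nlinarith [mul_sub_le_sub_succ_of_mul_sub_le_succ ha.ne' h m]

theorem tendsto_atTop_of_mul_sub_le_succ (ha : 1 < a) (h : ∀ m, a * u m - B ≤ u (m + 1))
    {k : ℕ} (hk : B / (a - 1) < u k) : Tendsto u atTop atTop := by
  have hpow : Tendsto (fun n ↦ a ^ n * (u k - B / (a - 1)) + B / (a - 1)) atTop atTop :=
    tendsto_atTop_add_const_right _ _
      ((tendsto_pow_atTop_atTop_of_one_lt ha).atTop_mul_const (sub_pos.2 hk))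
  refine (tendsto_add_atTop_iff_nat k).1 (tendsto_atTop_mono (fun n ↦ ?_) hpow)
  have := pow_mul_le_of_mul_le_succ (by linarith) (mul_sub_le_sub_succ_of_mul_sub_le_succ
    ha.ne' h) k n
  rw [add_comm n k]
  linarith

end AffineGrowth

theorem conjugate_orbit_diverges_general (β : ℝ) (γ : ℂ)
    (hγ : 1 < ‖γ‖)
    (c : ℕ → ℤ) (hc : ∀ m, 0 ≤ c m ∧ c m ≤ ⌊β⌋)
    (v : ℕ → ℂ) (hv : ∀ m, v (m + 1) = γ * v m - c (m + 1))
    (k : ℕ) (hk : (⌊β⌋ : ℝ) / (‖γ‖ - 1) < ‖v k‖) :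
    StrictMonoOn (fun m => ‖v m‖) {m | k ≤ m} ∧
      Filter.Tendsto (fun m => ‖v m‖) Filter.atTop Filter.atTop := by
  have hdigit : ∀ m, ‖(c m : ℂ)‖ ≤ ⌊β⌋ := fun m ↦ by
    rw [Complex.norm_intCast, abs_of_nonneg (Int.cast_nonneg (hc m).1)]
    exact_mod_cast (hc m).2
  have hstep : ∀ m, ‖γ‖ * ‖v m‖ - ⌊β⌋ ≤ ‖v (m + 1)‖ := fun m ↦ by
    calc ‖γ‖ * ‖v m‖ - ⌊β⌋ ≤ ‖γ * v m‖ - ‖(c (m + 1) : ℂ)‖ := by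
          rw [norm_mul]; linarith [hdigit (m + 1)]
      _ ≤ ‖v (m + 1)‖ := hv m ▸ norm_sub_norm_le _ _
  exact ⟨strictMonoOn_Ici_of_mul_sub_le_succ hγ hstep hk,
    tendsto_atTop_of_mul_sub_le_succ hγ hstep hk⟩

/-- Let `β > 1` be a real algebraic number and `γ` a conjugate of `β` (a root of
a common irreducible rational polynomial) with `|γ| > 1`.  Suppose `(x_m)` is a
sequence in `ℚ(β)` with `x_{m+1} = β x_m - c_{m+1}` for integer digits
`0 ≤ c_m ≤ ⌊β⌋`, and let `v_m = σ(x_m)` be its image under the embedding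
`σ : ℚ(β) → ℂ` with `σ(β) = γ`, so that `v_{m+1} = γ v_m - c_{m+1}`.
If `|v_k| > ⌊β⌋/(|γ| - 1)` for some `k`, then `(|v_m|)` is strictly increasing
for `m ≥ k` and diverges to infinity. -/
theorem conjugate_orbit_diverges (β : ℝ) (hβ : 1 < β) (γ : ℂ)
    (hγ : 1 < ‖γ‖)
    (p : Polynomial ℚ) (hp : Irreducible p)
    (hpβ : Polynomial.aeval β p = 0) (hpγ : Polynomial.aeval γ p = 0)
    (c : ℕ → ℤ) (hc : ∀ m, 0 ≤ c m ∧ c m ≤ ⌊β⌋)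
    (v : ℕ → ℂ) (hv : ∀ m, v (m + 1) = γ * v m - c (m + 1))
    (k : ℕ) (hk : (⌊β⌋ : ℝ) / (‖γ‖ - 1) < ‖v k‖) :
    StrictMonoOn (fun m => ‖v m‖) {m | k ≤ m} ∧
      Filter.Tendsto (fun m => ‖v m‖) Filter.atTop Filter.atTop :=
  conjugate_orbit_diverges_general β γ hγ c hc v hv k hk
end

section
/- Let β_n > 1 be the root of x^n - x - 1 for n ≥ 8. Then β_n satisfies |β_n - (1 + (log 2)/n)| ≤ 2/(3n²). -/
open Finset in
lemma my_mono (n : ℕ) (hn : 2 ≤ n) {x y : ℝ} (hx : 1 ≤ x) (hxy : x < y) :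
    x ^ n - x - 1 < y ^ n - y - 1 := by
  have hy : 1 ≤ y := by linarith
  have hsum : (n : ℝ) ≤ ∑ i ∈ range n, y ^ i * x ^ (n - 1 - i) := by
    calc (n : ℝ) = ∑ i ∈ range n, (1:ℝ) := by simp
    _ ≤ _ := by
        apply Finset.sum_le_sum
        intro i _
        have h1 : (1:ℝ) ≤ y ^ i := one_le_pow₀ hy
        have h2 : (1:ℝ) ≤ x ^ (n - 1 - i) := one_le_pow₀ hx
        nlinarith
  have hgeom := geom_sum₂_mul (y : ℝ) x n
  have hmul := mul_le_mul_of_nonneg_right hsum (le_of_lt (sub_pos.mpr hxy))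
  have h2n : (2:ℝ) ≤ (n:ℝ) := by exact_mod_cast hn
  nlinarith [hmul, hgeom, sub_pos.mpr hxy]

lemma poly_key (u m w : ℝ) (hm0 : 0 < m) (hm : m ≤ 1/10)
    (hu0 : 0.69 ≤ u) (hu1 : u ≤ 0.6931471808 + 2*m/3)
    (hw0 : 0 < w) (hw : w ≤ 1.087) :
    u*(1+u)/2 + u^4*m^2*w < 2/3 + u^3*m/3 := by
  have hu2 : u ≤ 0.76 := by linarith
  have hm2 : m^2 ≤ m/10 := by nlinarith
  have h1 : u^4*m^2*w ≤ 0.363*m^2 := by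
    nlinarith [sq_nonneg m, sq_nonneg (u^2),
      pow_le_pow_left₀ (by linarith : (0:ℝ) ≤ u) hu2 4,
      mul_nonneg (sq_nonneg m) (by positivity : (0:ℝ) ≤ u^4)]
  have h2 : 0.109*m ≤ u^3*m/3 := by
    nlinarith [pow_le_pow_left₀ (by norm_num : (0:ℝ) ≤ 0.69) hu0 3]
  have h3 : u^2 ≤ (0.6931471808 + 2*m/3)^2 := by nlinarith
  nlinarith [h1, h2, h3, hm2]

lemma key_main (N L u t w : ℝ) (hN : 10 ≤ N)
    (hL0 : 0.6931471803 < L) (hL1 : L < 0.6931471808)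
    (hu : u = L + 2/(3*N)) (htN : t * N = u) (hw : w * (1 - t) = 1) :
    L + t/2 < N * (t - t^2/2 + t^3/3 - t^4/(1-t)) := by
  have hN0 : (0:ℝ) < N := by linarith
  have hm0 : (0:ℝ) < 1/N := by positivity
  set m : ℝ := 1/N with hmdef
  have hmN : m * N = 1 := by rw [hmdef]; field_simp
  have hm1 : m ≤ 1/10 := by
    rw [hmdef, div_le_div_iff₀ hN0 (by norm_num)]; linarith
  have hu0 : 0.69 ≤ u := by
    have : 0 < 2/(3*N) := by positivity
    linarith [hu]
  have hu1 : u ≤ 0.76 := by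
    have h23 : 2/(3*N) ≤ 2/30 := by
      apply div_le_div_of_nonneg_left (by norm_num) (by norm_num) (by linarith)
    rw [hu]; linarith
  have htm : t = u * m := by
    have : t * (m * N) = u * m := by rw [mul_comm m N, ← mul_assoc, htN]
    rwa [hmN, mul_one] at this
  have ht0 : 0 < t := by rw [htm]; positivity
  have ht1 : t ≤ 0.076 := by nlinarith [htN]
  have h1t0 : (0:ℝ) < 1 - t := by linarith
  have hw0 : 0 < w := by nlinarith [hw]
  have hw1 : w ≤ 1.087 := by nlinarith [hw]
  have hwinv : (1 - t)⁻¹ = w := by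
    field_simp
    linarith [hw]
  have hLm : L = u - 2*m/3 := by
    rw [hu, hmdef]; ring
  have hrw : N * (t - t^2/2 + t^3/3 - t^4/(1-t)) = u - u^2*m/2 + u^3*m^2/3 - u^4*m^3*w := by
    have h4 : t^4/(1-t) = t^4*w := by rw [div_eq_mul_inv, hwinv]
    rw [h4, htm]
    linear_combination (u - u^2*m/2 + u^3*m^2/3 - u^4*m^3*w) * hmN
  rw [hrw, hLm, htm]
  nlinarith [mul_lt_mul_of_pos_left (poly_key u m w hm0 hm1 hu0 (by rw [hLm] at hL1; linarith) hw0 hw1) hm0]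

open Finset in
lemma c_side (n : ℕ) (hn : 10 ≤ n) :
    0 < (1 + (Real.log 2 + 2/(3*(n:ℝ)))/(n:ℝ)) ^ n
        - (1 + (Real.log 2 + 2/(3*(n:ℝ)))/(n:ℝ)) - 1 := by
  have hN : (10:ℝ) ≤ (n:ℝ) := by exact_mod_cast hn
  have hN0 : (0:ℝ) < (n:ℝ) := by linarith
  have hL0 : (0.6931471803:ℝ) < Real.log 2 := Real.log_two_gt_d9
  have hL1 : Real.log 2 < 0.6931471808 := Real.log_two_lt_d9
  have hu1 : Real.log 2 + 2/(3*(n:ℝ)) ≤ 0.76 := by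
    have h23 : 2/(3*(n:ℝ)) ≤ 2/30 := by
      apply div_le_div_of_nonneg_left (by norm_num) (by norm_num) (by linarith)
    linarith
  have hu0 : (0.69:ℝ) ≤ Real.log 2 + 2/(3*(n:ℝ)) := by
    have : 0 < 2/(3*(n:ℝ)) := by positivity
    linarith
  set t : ℝ := (Real.log 2 + 2/(3*(n:ℝ)))/(n:ℝ) with htdef
  have ht0 : 0 < t := by rw [htdef]; positivity
  have ht1 : t ≤ 0.076 := by
    rw [htdef, div_le_iff₀ hN0]
    nlinarith
  have h1t0 : (0:ℝ) < 1 - t := by linarith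
  have hkey : Real.log 2 + t/2 < (n:ℝ) * (t - t^2/2 + t^3/3 - t^4/(1-t)) := by
    apply key_main (n:ℝ) (Real.log 2) (Real.log 2 + 2/(3*(n:ℝ))) t ((1-t)⁻¹) hN hL0 hL1 rfl
    · rw [htdef]; field_simp
    · field_simp
  -- series lower bound for log(1+t)
  have hser := Real.abs_log_sub_add_sum_range_le (x := -t)
    (by rw [abs_neg, abs_of_nonneg ht0.le]; linarith) 3
  have hsum : (∑ i ∈ range 3, (-t) ^ (i + 1) / (i + 1)) = -t + t^2/2 - t^3/3 := by
    simp [Finset.sum_range_succ]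
    ring
  rw [hsum, sub_neg_eq_add, abs_neg, abs_of_nonneg ht0.le] at hser
  have hlog_low : t - t^2/2 + t^3/3 - t^4/(1-t) ≤ Real.log (1+t) := by
    have := (abs_le.mp hser).1
    linarith
  have hlog_up : Real.log (2+t) ≤ Real.log 2 + t/2 := by
    have h2t : (2:ℝ) + t = 2 * (1 + t/2) := by ring
    rw [h2t, Real.log_mul (by norm_num) (by linarith)]
    have := Real.log_le_sub_one_of_pos (show (0:ℝ) < 1 + t/2 by linarith)
    linarith
  have hc1 : (0:ℝ) < 1 + t := by linarith
  have hpow : (1+t)^n = Real.exp ((n:ℝ) * Real.log (1+t)) := by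
    rw [Real.exp_nat_mul, Real.exp_log hc1]
  have hlt : Real.log (2+t) < (n:ℝ) * Real.log (1+t) := by
    calc Real.log (2+t) ≤ Real.log 2 + t/2 := hlog_up
    _ < (n:ℝ) * (t - t^2/2 + t^3/3 - t^4/(1-t)) := hkey
    _ ≤ (n:ℝ) * Real.log (1+t) := mul_le_mul_of_nonneg_left hlog_low hN0.le
  have hfin : (2:ℝ) + t < (1+t)^n := by
    rw [hpow, ← Real.exp_log (show (0:ℝ) < 2 + t by linarith)]
    exact Real.exp_lt_exp.mpr hlt
  linarith

/-- For `n ≥ 8`, the real root `β_n > 1` of `x^n - x - 1` satisfies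
`|β_n - (1 + log 2 / n)| ≤ 2/(3n²)`. -/
theorem beta_asymptotic (n : ℕ) (hn : 8 ≤ n) (b : ℝ)
    (hb : 1 < b) (hroot : b ^ n - b - 1 = 0) :
    |b - (1 + Real.log 2 / n)| ≤ 2 / (3 * (n : ℝ) ^ 2) := by
  have h2n : 2 ≤ n := by omega
  have hNR : (8:ℝ) ≤ (n:ℝ) := by exact_mod_cast hn
  have hN0 : (0:ℝ) < (n:ℝ) := by linarith
  have hL0 : (0.6931471803:ℝ) < Real.log 2 := Real.log_two_gt_d9
  have hL1 : Real.log 2 < 0.6931471808 := Real.log_two_lt_d9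
  have hd0 : (0:ℝ) < 2/(3*(n:ℝ)) := by positivity
  have hd1 : 2/(3*(n:ℝ)) ≤ 2/24 := by
    apply div_le_div_of_nonneg_left (by norm_num) (by norm_num) (by linarith)
  -- the lower endpoint a
  have ha1 : (1:ℝ) ≤ 1 + (Real.log 2 - 2/(3*(n:ℝ)))/(n:ℝ) := by
    have : 0 ≤ (Real.log 2 - 2/(3*(n:ℝ)))/(n:ℝ) := by
      apply div_nonneg _ hN0.le
      linarith
    linarith
  have haneg : (1 + (Real.log 2 - 2/(3*(n:ℝ)))/(n:ℝ))^n
      - (1 + (Real.log 2 - 2/(3*(n:ℝ)))/(n:ℝ)) - 1 < 0 := by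
    have hs0 : 0 ≤ (Real.log 2 - 2/(3*(n:ℝ)))/(n:ℝ) := by
      apply div_nonneg _ hN0.le
      linarith
    have h1 : 1 + (Real.log 2 - 2/(3*(n:ℝ)))/(n:ℝ)
        ≤ Real.exp ((Real.log 2 - 2/(3*(n:ℝ)))/(n:ℝ)) := by
      linarith [Real.add_one_le_exp ((Real.log 2 - 2/(3*(n:ℝ)))/(n:ℝ))]
    have h2 : (1 + (Real.log 2 - 2/(3*(n:ℝ)))/(n:ℝ))^n
        ≤ Real.exp ((n:ℝ) * ((Real.log 2 - 2/(3*(n:ℝ)))/(n:ℝ))) := by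
      rw [Real.exp_nat_mul]
      exact pow_le_pow_left₀ (by linarith) h1 n
    have h3 : (n:ℝ) * ((Real.log 2 - 2/(3*(n:ℝ)))/(n:ℝ)) = Real.log 2 - 2/(3*(n:ℝ)) := by
      field_simp
    have h4 : Real.exp (Real.log 2 - 2/(3*(n:ℝ))) < Real.exp (Real.log 2) :=
      Real.exp_lt_exp.mpr (by linarith)
    rw [Real.exp_log (by norm_num : (0:ℝ) < 2)] at h4
    rw [h3] at h2
    linarith
  have hab : 1 + (Real.log 2 - 2/(3*(n:ℝ)))/(n:ℝ) < b := by
    by_contra h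
    push_neg at h
    rcases lt_or_eq_of_le h with hlt | heq
    · have := my_mono n h2n hb.le hlt
      linarith [hroot]
    · rw [heq] at hroot
      linarith
  -- the upper endpoint c
  have hcpos : 0 < (1 + (Real.log 2 + 2/(3*(n:ℝ)))/(n:ℝ))^n
      - (1 + (Real.log 2 + 2/(3*(n:ℝ)))/(n:ℝ)) - 1 := by
    rcases lt_or_ge n 10 with h10 | h10
    · interval_cases n
      · -- n = 8
        have he : 2/(3*((8:ℕ):ℝ)) = 1/12 := by norm_num
        rw [he]
        have hq : (1 + ((6931471803:ℝ)/10^10 + 1/12)/8) < 1 + (Real.log 2 + 1/12)/((8:ℕ):ℝ) := by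
          push_cast
          have : (6931471803:ℝ)/10^10 < Real.log 2 := by
            rw [show (6931471803:ℝ)/10^10 = 0.6931471803 by norm_num]
            exact hL0
          linarith
        have hfq : (0:ℝ) < (1 + ((6931471803:ℝ)/10^10 + 1/12)/8)^(8:ℕ)
            - (1 + ((6931471803:ℝ)/10^10 + 1/12)/8) - 1 := by norm_num
        have := my_mono 8 (by norm_num) (by norm_num) hq
        linarith
      · -- n = 9
        have he : 2/(3*((9:ℕ):ℝ)) = 2/27 := by norm_num
        rw [he]
        have hq : (1 + ((6931471803:ℝ)/10^10 + 2/27)/9) < 1 + (Real.log 2 + 2/27)/((9:ℕ):ℝ) := by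
          push_cast
          have : (6931471803:ℝ)/10^10 < Real.log 2 := by
            rw [show (6931471803:ℝ)/10^10 = 0.6931471803 by norm_num]
            exact hL0
          linarith
        have hfq : (0:ℝ) < (1 + ((6931471803:ℝ)/10^10 + 2/27)/9)^(9:ℕ)
            - (1 + ((6931471803:ℝ)/10^10 + 2/27)/9) - 1 := by norm_num
        have := my_mono 9 (by norm_num) (by norm_num) hq
        linarith
    · exact c_side n h10
  have hbc : b < 1 + (Real.log 2 + 2/(3*(n:ℝ)))/(n:ℝ) := by
    by_contra h
    push_neg at h
    rcases lt_or_eq_of_le h with hlt | heq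
    · have hc1 : (1:ℝ) ≤ 1 + (Real.log 2 + 2/(3*(n:ℝ)))/(n:ℝ) := by
        have : 0 ≤ (Real.log 2 + 2/(3*(n:ℝ)))/(n:ℝ) := by positivity
        linarith
      have := my_mono n h2n hc1 hlt
      linarith [hroot]
    · rw [← heq] at hroot
      linarith
  -- conclude
  have hN2 : (0:ℝ) < (n:ℝ)^2 := by positivity
  have haval : (Real.log 2 - 2/(3*(n:ℝ)))/(n:ℝ) = Real.log 2/(n:ℝ) - 2/(3*(n:ℝ)^2) := by
    field_simp
  have hcval : (Real.log 2 + 2/(3*(n:ℝ)))/(n:ℝ) = Real.log 2/(n:ℝ) + 2/(3*(n:ℝ)^2) := by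
    field_simp
  rw [haval] at hab
  rw [hcval] at hbc
  rw [abs_le]
  constructor <;> linarith
end

section
/- For n ≥ 8, letting β_n > 1 be the root of x^n - x - 1 and m_0 = ⌊log(1 - 1/β_n)/log(1/β_n)⌋, we have m_0 ≥ (n log n)/(log 2). -/
/-! Write `δ = β - 1`. The binomial bound `(1 + 5/(6n))^n ≥ 2 + 5/(6n)` and the monotonicity of
`x ↦ x^n - x` on `[1, ∞)` give `δ ≤ 5/(6n)`. Since `log(1 - 1/β) / log(1/β) = 1 - log δ / log β`
and `n log β = log (β + 1)`, the claim reduces to `log n · log (2 + δ) ≤ log 2 · (-log δ)`.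
The tangent-line bound for `log` gives `log (2 + δ) ≤ log 2 + δ/2` and `-log δ ≥ log n + 1/6`,
and what remains, `(5/12) · log n / n ≤ (1/6) · log 2`, follows from `log n / n ≤ log 8 / 8`. -/

open Real

theorem one_add_mul_add_choose_two_mul_sq_le_pow {R : Type*} [CommSemiring R] [PartialOrder R]
    [IsOrderedRing R] {a : R} (ha : 0 ≤ a) (n : ℕ) :
    1 + n * a + n.choose 2 * a ^ 2 ≤ (1 + a) ^ n := by
  induction n with
  | zero => simp
  | succ n ih =>
    calc 1 + (n + 1 : ℕ) * a + (n + 1).choose 2 * a ^ 2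
        ≤ 1 + (n + 1 : ℕ) * a + (n + 1).choose 2 * a ^ 2 + n.choose 2 * a ^ 3 :=
          le_add_of_nonneg_right (by positivity)
      _ = (1 + n * a + n.choose 2 * a ^ 2) * (1 + a) := by
          simp only [Nat.choose_succ_succ', Nat.choose_one_right]
          push_cast
          ring
      _ ≤ (1 + a) ^ n * (1 + a) := by gcongr; exact add_nonneg zero_le_one ha
      _ = (1 + a) ^ (n + 1) := (pow_succ _ _).symm

theorem le_of_pow_sub_self_le {n : ℕ} (hn : 2 ≤ n) {b c : ℝ} (hb : 1 < b) (hc : 0 ≤ c)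
    (h : b ^ n - b ≤ c ^ n - c) : b ≤ c := by
  by_contra! hcb
  have hcpow : c ^ n ≤ b ^ (n - 1) * c := by
    rw [← Nat.sub_one_add_one_eq_of_pos (by omega : 0 < n), pow_succ, Nat.add_sub_cancel]
    gcongr
  have hbpow : 1 < b ^ (n - 1) := one_lt_pow₀ hb (by omega)
  have hbn : b ^ n = b ^ (n - 1) * b := by
    rw [← pow_succ, Nat.sub_one_add_one_eq_of_pos (by omega)]
  nlinarith

theorem Real.log_le_log_add_div_sub_one {x y : ℝ} (hx : 0 < x) (hy : 0 < y) :
    log x ≤ log y + x / y - 1 := by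
  have := log_le_sub_one_of_pos (div_pos hx hy)
  rw [log_div hx.ne' hy.ne'] at this
  linarith

theorem Real.log_div_self_le_of_eight_le {x : ℝ} (hx : 8 ≤ x) : log x / x ≤ 3 * log 2 / 8 := by
  have he : exp 1 ≤ 8 := by linarith [exp_one_lt_d9]
  calc log x / x ≤ log 8 / 8 := log_div_self_antitoneOn he (he.trans hx) hx
    _ = 3 * log 2 / 8 := by
      rw [show (8 : ℝ) = 2 ^ 3 by norm_num, log_pow]
      norm_num

theorem log_one_sub_one_div_div_log_one_div {b : ℝ} (hb : 1 < b) :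
    log (1 - 1 / b) / log (1 / b) = 1 - log (b - 1) / log b := by
  have hlog : log b ≠ 0 := (log_pos hb).ne'
  rw [one_sub_div (by positivity), log_div (by linarith) (by positivity), one_div, log_inv]
  field_simp
  ring

section Root

variable {n : ℕ} {b : ℝ}

theorem sub_one_le_of_pow_eq_add_one (hn : 8 ≤ n) (hb : 1 < b) (hbn : b ^ n = b + 1) :
    b - 1 ≤ 5 / (6 * n) := by
  have hn' : (8 : ℝ) ≤ n := by exact_mod_cast hn
  have hδ : (0 : ℝ) ≤ 5 / (6 * n) := by positivity
  have hcn : (1 + 5 / (6 * n)) + 1 ≤ (1 + 5 / (6 * n) : ℝ) ^ n := by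
    refine le_trans ?_ (one_add_mul_add_choose_two_mul_sq_le_pow hδ n)
    rw [Nat.cast_choose_two]
    field_simp
    nlinarith
  have := le_of_pow_sub_self_le (n := n) (c := 1 + 5 / (6 * n)) (by omega) hb (by positivity)
    (by linarith)
  linarith

theorem log_mul_log_add_one_le (hn : 8 ≤ n) (hb : 1 < b) (hbn : b ^ n = b + 1) :
    log n * log (b + 1) ≤ log 2 * -log (b - 1) := by
  have hn' : (8 : ℝ) ≤ n := by exact_mod_cast hn
  have hnpos : (0 : ℝ) < n := by linarith
  have hδ := sub_one_le_of_pow_eq_add_one hn hb hbn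
  have hlog_add : log (b + 1) ≤ log 2 + 5 / (12 * n) := by
    have := log_le_log_add_div_sub_one (by linarith : 0 < b + 1) two_pos
    have : (b + 1) / 2 - 1 ≤ 5 / (12 * n) := by
      rw [show (5 : ℝ) / (12 * n) = 5 / (6 * n) / 2 by field_simp; norm_num]
      linarith
    linarith
  have hlog_sub : log (b - 1) ≤ -log n - 1 / 6 := by
    have := log_le_log_add_div_sub_one (by linarith : 0 < b - 1) (one_div_pos.2 hnpos)
    rw [log_div one_ne_zero hnpos.ne', log_one] at this
    have : (b - 1) / (1 / n) ≤ 5 / 6 := by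
      rw [div_le_iff₀ (by positivity)]
      calc b - 1 ≤ 5 / (6 * n) := hδ
        _ = 5 / 6 * (1 / n) := by field_simp
    linarith
  have hlogn := log_div_self_le_of_eight_le hn'
  have hlogn0 : 0 ≤ log n := log_nonneg (by linarith)
  have hlog2 : 0 < log 2 := log_pos one_lt_two
  calc log n * log (b + 1) ≤ log n * (log 2 + 5 / (12 * n)) := by gcongr
    _ = log 2 * log n + 5 / 12 * (log n / n) := by field_simp
    _ ≤ log 2 * log n + 5 / 12 * (3 * log 2 / 8) := by gcongr
    _ ≤ log 2 * -log (b - 1) := by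
      linarith [mul_le_mul_of_nonneg_left hlog_sub hlog2.le]

end Root

/-- For `n ≥ 8`, with `β_n > 1` the real root of `x^n - x - 1` and
`m₀ = ⌊log(1 - 1/β_n)/log(1/β_n)⌋` the position of the second nonzero digit of
the beta expansion of `1`, we have `m₀ ≥ n log n / log 2`. -/
theorem second_digit_lower_bound (n : ℕ) (hn : 8 ≤ n) (b : ℝ)
    (hb : 1 < b) (hroot : b ^ n - b - 1 = 0)
    (m₀ : ℤ) (hm₀ : m₀ = ⌊Real.log (1 - 1 / b) / Real.log (1 / b)⌋) :
    (n : ℝ) * Real.log n / Real.log 2 ≤ (m₀ : ℝ) := by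
  have hbn : b ^ n = b + 1 := by linarith
  have key := log_mul_log_add_one_le hn hb hbn
  rw [← hbn, log_pow] at key
  have hfloor := Int.sub_one_lt_floor (log (1 - 1 / b) / log (1 / b))
  rw [← hm₀, log_one_sub_one_div_div_log_one_div hb, sub_sub_cancel_left] at hfloor
  have hbound : n * log n / log 2 ≤ -(log (b - 1) / log b) := by
    rw [← neg_div, div_le_div_iff₀ (log_pos one_lt_two) (log_pos hb)]
    linarith
  linarith
end

section
/- For n ≥ 8, the complex root γ_n of x^n - x - 1 closest to β_n with positive imaginary part satisfies 1/(|γ_n| - 1) ≤ 3n/2. -/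
/-!
Write `s = ‖γ‖²` and `a = Re γ`. Taking norms in `γⁿ = γ + 1` gives `sⁿ - s = 2a + 1`, and
`s ↦ sⁿ - s` is increasing on `[1, ∞)`, so `t < s` for every `t ≥ 1` with `tⁿ - t < 2a + 1`.
The disc around `1 + (log 2 + 2πi)/n` gives `a ≥ 1 + log 2 / n - 24/n²`, and for
`t = (1 + 2/(3n))²` we have `tⁿ ≤ e^{4/3}`; this settles `n ≥ 10` uniformly and `n = 9` by
computation. For `n = 8` the lower bound on `a` falls short by about `10⁻³`. There, assuming
`s ≤ t`, the monotonicity bounds `a` from above, which pushes `γ` to the left edge of the disc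
where `|Im γ - π/4| < 0.029`; hence `s ≤ 1.172`, and monotonicity with `t = 1.172` now
contradicts the lower bound on `a`.
-/

open Complex

theorem pow_sub_self_le_pow_sub_self {s t : ℝ} {n : ℕ} (hn : n ≠ 0) (hs : 0 ≤ s) (ht : 1 ≤ t)
    (hst : s ≤ t) : s ^ n - s ≤ t ^ n - t := by
  rcases le_total s 1 with hs1 | hs1
  · linarith [pow_le_of_le_one hs hs1 hn, le_self_pow₀ ht hn]
  · obtain ⟨k, rfl⟩ := Nat.exists_eq_succ_of_ne_zero hn
    rw [pow_succ, pow_succ]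
    nlinarith [pow_le_pow_left₀ hs hst k, one_le_pow₀ (n := k) hs1]

theorem normSq_pow_sub_normSq_of_pow_sub_sub_one_eq_zero {γ : ℂ} {n : ℕ}
    (hroot : γ ^ n - γ - 1 = 0) : normSq γ ^ n - normSq γ = 2 * γ.re + 1 := by
  rw [← map_pow, show γ ^ n = γ + 1 by linear_combination hroot]
  simp only [normSq_apply, add_re, add_im, one_re, one_im]
  ring

theorem two_mul_re_add_one_le_of_normSq_le {γ : ℂ} {n : ℕ} {t : ℝ} (hn : n ≠ 0)
    (hroot : γ ^ n - γ - 1 = 0) (ht : 1 ≤ t) (hγt : normSq γ ≤ t) :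
    2 * γ.re + 1 ≤ t ^ n - t :=
  normSq_pow_sub_normSq_of_pow_sub_sub_one_eq_zero hroot ▸
    pow_sub_self_le_pow_sub_self hn (normSq_nonneg γ) ht hγt

theorem lt_normSq_of_pow_sub_self_lt {γ : ℂ} {n : ℕ} {t : ℝ} (hn : n ≠ 0)
    (hroot : γ ^ n - γ - 1 = 0) (ht : 1 ≤ t) (hlt : t ^ n - t < 2 * γ.re + 1) :
    t < normSq γ :=
  lt_of_not_ge fun hγt => hlt.not_ge (two_mul_re_add_one_le_of_normSq_le hn hroot ht hγt)

/-- First-order expansion of `2^{1/n} e^{2πi/n}`: near `1`, `γⁿ = γ + 1` reads `γⁿ ≈ 2`. -/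
noncomputable def gammaApprox (n : ℕ) : ℂ := 1 + ((Real.log 2 : ℂ) + 2 * Real.pi * I) / n

theorem gammaApprox_re (n : ℕ) : (gammaApprox n).re = 1 + Real.log 2 / n := by
  simp [gammaApprox, div_natCast_re, -ofNat_log]

theorem gammaApprox_im (n : ℕ) : (gammaApprox n).im = 2 * Real.pi / n := by
  simp [gammaApprox, div_natCast_im, -ofNat_log]

theorem sub_le_re_of_norm_sub_gammaApprox_le {γ : ℂ} {n : ℕ} {r : ℝ}
    (h : ‖γ - gammaApprox n‖ ≤ r) : 1 + Real.log 2 / n - r ≤ γ.re := by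
  have := (abs_le.mp ((abs_re_le_norm _).trans h)).1
  rw [sub_re, gammaApprox_re] at this
  linarith

theorem sq_add_sq_le_of_norm_sub_gammaApprox_le {γ : ℂ} {n : ℕ} {r : ℝ}
    (h : ‖γ - gammaApprox n‖ ≤ r) :
    (γ.re - (1 + Real.log 2 / n)) ^ 2 + (γ.im - 2 * Real.pi / n) ^ 2 ≤ r ^ 2 := by
  have := pow_le_pow_left₀ (norm_nonneg _) h 2
  rwa [Complex.sq_norm, normSq_apply, sub_re, sub_im, gammaApprox_re, gammaApprox_im,
    ← sq, ← sq] at this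

theorem exp_four_div_three_lt : Real.exp (4 / 3) < 3.7937 := by
  have h : Real.exp (4 / 3) ^ 3 = Real.exp 1 ^ 4 := by
    rw [← Real.exp_nat_mul, ← Real.exp_nat_mul]; norm_num
  have he : Real.exp 1 ^ 4 < 2.7182818286 ^ 4 :=
    pow_lt_pow_left₀ Real.exp_one_lt_d9 (Real.exp_pos 1).le (by norm_num)
  exact lt_of_pow_lt_pow_left₀ 3 (by norm_num) (by rw [h]; linarith [he])

theorem pow_sub_self_lt_of_ten_le {n : ℕ} (hn : 10 ≤ n) {a : ℝ}
    (ha : 1 + Real.log 2 / n - 24 / (n : ℝ) ^ 2 ≤ a) :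
    ((1 + 2 / (3 * n : ℝ)) ^ 2) ^ n - (1 + 2 / (3 * n : ℝ)) ^ 2 < 2 * a + 1 := by
  have hpow : ((1 + 2 / (3 * n : ℝ)) ^ 2) ^ n < 3.7937 := by
    calc ((1 + 2 / (3 * n : ℝ)) ^ 2) ^ n = (1 - -(4 / 3) / ((2 * n : ℕ) : ℝ)) ^ (2 * n) := by
          rw [← pow_mul, mul_comm]; push_cast; field_simp; ring
      _ ≤ Real.exp (-(-(4 / 3))) := Real.one_sub_div_pow_le_exp_neg
          (by push_cast; linarith [n.cast_nonneg (α := ℝ)])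
      _ < 3.7937 := by rw [neg_neg]; exact exp_four_div_three_lt
  have hm : (0 : ℝ) < 1 / n := by positivity
  have hm10 : (1 / n : ℝ) ≤ 1 / 10 := by gcongr; exact_mod_cast hn
  have hT : (1 + 2 / (3 * n : ℝ)) ^ 2 = 1 + 4 / 3 * (1 / n) + 4 / 9 * (1 / n) ^ 2 := by ring
  rw [div_eq_mul_one_div, div_eq_mul_one_div 24, ← one_div_pow] at ha
  nlinarith [Real.log_two_gt_d9, mul_nonneg hm.le (sub_nonneg.mpr hm10)]

theorem pow_sub_self_lt_of_nine {a : ℝ} (ha : 1 + Real.log 2 / 9 - 24 / 9 ^ 2 ≤ a) :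
    ((1 + 2 / (3 * 9) : ℝ) ^ 2) ^ 9 - (1 + 2 / (3 * 9) : ℝ) ^ 2 < 2 * a + 1 := by
  norm_num
  linarith [Real.log_two_gt_d9]

theorem sq_lt_normSq_of_eight {γ : ℂ} (hroot : γ ^ 8 - γ - 1 = 0)
    (hγ : ‖γ - gammaApprox 8‖ ≤ 24 / 8 ^ 2) : (1 + 2 / (3 * 8) : ℝ) ^ 2 < normSq γ := by
  have hdisc := sq_add_sq_le_of_norm_sub_gammaApprox_le hγ
  have hre := sub_le_re_of_norm_sub_gammaApprox_le hγ
  push_cast at hdisc hre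
  have hL := Real.log_two_gt_d9
  have hπ := Real.pi_gt_d6
  have hπ' := Real.pi_lt_d6
  by_contra! hT
  have hre_le : γ.re ≤ 0.71275 := by
    have := two_mul_re_add_one_le_of_normSq_le (by norm_num) hroot (by norm_num) hT
    norm_num at this
    linarith
  have hIm : |γ.im - 2 * Real.pi / 8| ≤ 0.0289 := by
    apply abs_le_of_sq_le_sq _ (by norm_num)
    nlinarith
  have hs : normSq γ ≤ 1.172 := by
    rw [normSq_apply]
    have := abs_le.mp hIm
    nlinarith
  have := two_mul_re_add_one_le_of_normSq_le (by norm_num) hroot (by norm_num) hs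
  norm_num at this hre
  linarith

theorem gamma_abs_reciprocal_bound_general (n : ℕ) (hn : 8 ≤ n) (γ : ℂ)
    (hroot : γ ^ n - γ - 1 = 0)
    (hγ : ‖γ - (1 + ((Real.log 2 : ℂ) + 2 * Real.pi * I) / n)‖
      ≤ 24 / (n : ℝ) ^ 2) :
    1 / (‖γ‖ - 1) ≤ 3 * (n : ℝ) / 2 := by
  change ‖γ - gammaApprox n‖ ≤ _ at hγ
  have hsq : (1 + 2 / (3 * n : ℝ)) ^ 2 < normSq γ := by
    have hre := sub_le_re_of_norm_sub_gammaApprox_le hγ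
    obtain rfl | rfl | hn10 : n = 8 ∨ n = 9 ∨ 10 ≤ n := by omega
    · simp only [Nat.cast_ofNat] at hγ ⊢
      exact sq_lt_normSq_of_eight hroot hγ
    · simp only [Nat.cast_ofNat] at hre ⊢
      exact lt_normSq_of_pow_sub_self_lt (by norm_num) hroot (by norm_num)
        (pow_sub_self_lt_of_nine hre)
    · exact lt_normSq_of_pow_sub_self_lt (by omega) hroot
        (one_le_pow₀ (le_add_of_nonneg_right (by positivity))) (pow_sub_self_lt_of_ten_le hn10 hre)
  have hnorm : 1 + 2 / (3 * n : ℝ) < ‖γ‖ := by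
    rw [normSq_eq_norm_sq] at hsq
    exact lt_of_pow_lt_pow_left₀ 2 (norm_nonneg γ) hsq
  have hpos : (0 : ℝ) < 2 / (3 * n) := by positivity
  rw [one_div_le (by linarith) (by positivity), one_div_div]
  linarith

/-- For `n ≥ 8`, the complex root `γ_n` of `x^n - x - 1` with positive
imaginary part closest to `β_n` (characterized by
`|γ_n - (1 + (log 2 + 2πi)/n)| ≤ 24/n²`) satisfies `1/(|γ_n| - 1) ≤ 3n/2`. -/
theorem gamma_abs_reciprocal_bound (n : ℕ) (hn : 8 ≤ n) (γ : ℂ)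
    (hroot : γ ^ n - γ - 1 = 0) (him : 0 < γ.im)
    (hγ : ‖γ - (1 + ((Real.log 2 : ℂ) + 2 * Real.pi * I) / n)‖
      ≤ 24 / (n : ℝ) ^ 2) :
    1 / (‖γ‖ - 1) ≤ 3 * (n : ℝ) / 2 :=
  gamma_abs_reciprocal_bound_general n hn γ hroot hγ
end
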